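/- arXiv:2511.04836 — 2 statements merged into one kernel-verified Lean document; each statement's English description precedes it below -/
import Mathlib

section
/- Let RΛ_S be a geometric R-realisation of (W,S). Then the contragredient representation of W on Hom_R(RΛ_S,ℝ), given by (w·Z)(v) := Z(w⁻¹·v), is faithful (the corresponding homomorphism from W to the group of ℝ-linear automorphisms of Hom_R(RΛ_S,ℝ) is injective), and the R-linear representation of W on RΛ_S is also faithful. In particular, every geometric R-realisation of (W,S) is faithful. -/
open scoped BigOperators

noncomputable section

/-- Data of a fusion ring structure on a ring `R`, with `ℤ`-basis indexed by `ι`. -/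
structure FusionData (R : Type*) [Ring R] (ι : Type*) [Fintype ι] [DecidableEq ι] where
  /-- the distinguished basis -/
  b : Module.Basis ι ℤ R
  /-- the index of the unit -/
  unit : ι
  b_unit : b unit = 1
  basis_mul_ne_zero : ∀ j k, b j * b k ≠ 0
  c_nonneg : ∀ j k i, 0 ≤ b.repr (b j * b k) i
  /-- the involution on the index set -/
  inv : ι → ι
  inv_invol : ∀ j, inv (inv j) = j
  /-- the `ℤ`-linear extension of the involution -/
  star : R →+ R
  star_basis : ∀ j, star (b j) = b (inv j)
  star_mul : ∀ x y, star (x * y) = star y * star x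
  c_unit_iff : ∀ j k, b.repr (b j * b k) unit = 1 ↔ k = inv j

namespace FusionData

variable {R : Type*} [Ring R] {ι : Type*} [Fintype ι] [DecidableEq ι]

/-- The structure constants of a fusion ring. -/
def c (F : FusionData R ι) (j k i : ι) : ℤ := F.b.repr (F.b j * F.b k) i

/-- Nonnegativity of an element of a fusion ring: all basis coefficients are nonnegative. -/
def nonneg (F : FusionData R ι) (r : R) : Prop := ∀ i, 0 ≤ F.b.repr r i

end FusionData

/-- The basis vector `α_s` of the free module `S → R`. -/
def simRoot (R : Type*) [Ring R] {S : Type*} [DecidableEq S] (s : S) : S → R :=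
  Pi.single s 1

/-- A geometric realisation of the Coxeter system `(W, S)` over a fusion ring `R`,
together with a Frobenius–Perron dimension homomorphism. -/
structure GeomSetting (R : Type*) [Ring R] (ι : Type*) [Fintype ι] [DecidableEq ι]
    (S : Type*) [Fintype S] [DecidableEq S] (W : Type*) [Group W] where
  /-- the fusion ring structure on `R` -/
  FD : FusionData R ι
  /-- the Coxeter matrix (`0` denotes `∞`) -/
  M : CoxeterMatrix S
  /-- the Coxeter system -/
  cs : CoxeterSystem M W
  /-- the Frobenius–Perron dimension -/
  FP : R →+* ℝ
  FP_basis : ∀ i, 1 ≤ FP (FD.b i)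
  FP_star : ∀ r, FP (FD.star r) = FP r
  /-- the sesquilinear form on `RΛ_S = S → R` -/
  B : (S → R) → (S → R) → R
  B_add_left : ∀ u u' v, B (u + u') v = B u v + B u' v
  B_add_right : ∀ u v v', B u (v + v') = B u v + B u v'
  B_sesq : ∀ (x y : R) (s t : S),
    B (x • simRoot R s) (y • simRoot R t)
      = y * B (simRoot R s) (simRoot R t) * FD.star x
  cartan_diag : ∀ s, B (simRoot R s) (simRoot R s) = 2
  cartan_nonneg : ∀ s t, s ≠ t →
    FD.nonneg (-(B (simRoot R s) (simRoot R t)))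
  cartan_star : ∀ s t, s ≠ t →
    B (simRoot R t) (simRoot R s)
      = FD.star (B (simRoot R s) (simRoot R t))
  cartan_fin : ∀ s t, s ≠ t → M s t ≠ 0 →
    FP (B (simRoot R s) (simRoot R t))
      = -2 * Real.cos (Real.pi / (M s t : ℝ))
  cartan_inf : ∀ s t, s ≠ t → M s t = 0 →
    FP (B (simRoot R s) (simRoot R t)) ≤ -2
  /-- the left `R`-linear action of `W` on `RΛ_S` -/
  rep : W →* ((S → R) ≃ₗ[R] (S → R))
  rep_simple : ∀ (s : S) (v : S → R),
    rep (cs.simple s) v = v - B (simRoot R s) v • simRoot R s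

namespace GeomSetting

variable {R : Type*} [Ring R] {ι : Type*} [Fintype ι] [DecidableEq ι]
  {S : Type*} [Fintype S] [DecidableEq S] {W : Type*} [Group W]

/-- The Cartan matrix `r_{s,t}` of the realisation. -/
def cartan (G : GeomSetting R ι S W) (s t : S) : R :=
  G.B (simRoot R s) (simRoot R t)

/-- The unfolded (integral) Cartan matrix `ř`. -/
def rcheck (G : GeomSetting R ι S W) (p q : ι × S) : ℤ :=
  if p.2 = q.2 then (if p.1 = q.1 then 2 else 0)
  else G.FD.b.repr (G.FD.b q.1 * G.cartan p.2 q.2) p.1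

/-- The unfolded Coxeter matrix `m̌` (`0` denotes `∞`). -/
def mcheck (G : GeomSetting R ι S W) (p q : ι × S) : ℕ :=
  if p = q then 1
  else if G.rcheck p q = 0 then 2
  else if G.rcheck p q = -1 then 3
  else 0

/-- The Coxeter relations of the unfolded Coxeter system. -/
def rels (G : GeomSetting R ι S W) : Set (FreeGroup (ι × S)) :=
  Set.range fun pq : (ι × S) × (ι × S) =>
    (FreeGroup.of pq.1 * FreeGroup.of pq.2) ^ G.mcheck pq.1 pq.2

/-- The unfolded Coxeter group `W̌`. -/
def Wcheck (G : GeomSetting R ι S W) : Type _ := PresentedGroup G.rels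

instance (G : GeomSetting R ι S W) : Group G.Wcheck :=
  QuotientGroup.Quotient.group _

/-- The generators `(b, s)` of the unfolded Coxeter group. -/
def gen (G : GeomSetting R ι S W) (p : ι × S) : G.Wcheck := PresentedGroup.of p

end GeomSetting


variable {R : Type*} [Ring R] {ι : Type*} [Fintype ι] [DecidableEq ι]
  {S : Type*} [Fintype S] [DecidableEq S] {W : Type*} [Group W]


/-- A function `Y : RΛ_S → ℝ` is an `R`-linear functional (with `ℝ` an `R`-module via
`FPdim`) if it is additive and `FPdim`-semilinear. -/
def GeomSetting.IsRLinearFunctional (G : GeomSetting R ι S W) (Y : (S → R) → ℝ) : Prop :=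
  (∀ u v : S → R, Y (u + v) = Y u + Y v) ∧ ∀ (r : R) (v : S → R), Y (r • v) = G.FP r * Y v

/-!
Since `FPdim` is a ring homomorphism, taking `FPdim` of the coordinates turns the action of `W` on
`RΛ_S` into the real reflection action attached to the Cartan matrix `FPdim r_{s,t}`, which is
`-2 cos (π / m_{s,t})` or at most `-2`. Tits' argument then goes through verbatim: if `ws > w`
then all coordinates of `w α_s` have nonnegative `FPdim`. Factor `w = w' a` with `a` in the
dihedral subgroup `⟨s, t⟩` (for a right descent `t` of `w`) and `w'` having neither `s` nor `t`
as a right descent; `a α_s` is a nonnegative combination of `α_s` and `α_t` whose coefficients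
are Chebyshev values `U_k (cos (π / m))`, and `w' α_s`, `w' α_t` are nonnegative by induction.
For `w ≠ 1` with right descent `s` this makes `FPdim ((w α_s)_s) = -FPdim (((ws) α_s)_s) ≤ 0`,
whereas the coordinate functional `v ↦ FPdim (v_s)` takes the value `1` on `α_s`.
-/

namespace CoxeterSystem

variable {B : Type*} {M : CoxeterMatrix B} (cs : CoxeterSystem M W)

theorem alternatingWord_eq_cons_or_succ_eq_cons {s t c : B} (hc : c = s ∨ c = t) (k : ℕ) :
    alternatingWord s t (k + 2) = c :: alternatingWord s t (k + 1) ∨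
      alternatingWord s t (k + 1) = c :: alternatingWord s t k := by
  rw [alternatingWord_succ' s t (k + 1), alternatingWord_succ' s t k]
  rcases Nat.even_or_odd k with hk | hk
  · rcases hc with rfl | rfl <;> simp [hk, Nat.even_add_one]
  · rcases hc with rfl | rfl <;> simp [Nat.not_even_iff_odd.mpr hk, Nat.even_add_one]

theorem exists_alternatingWord_suffix {w : W} {s t : B} (hs : ¬ cs.IsRightDescent w s)
    (ht : cs.IsRightDescent w t) :
    ∃ (w' : W) (k : ℕ), w = w' * cs.wordProd (alternatingWord s t k) ∧
      cs.length w' < cs.length w ∧ (∀ c, c = s ∨ c = t → ¬ cs.IsRightDescent w' c) ∧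
      cs.IsReduced (alternatingWord t s (k + 1)) := by
  classical
  set A : ℕ → Prop := fun j => ∃ w', w = w' * cs.wordProd (alternatingWord s t j) ∧
    cs.length w' + j = cs.length w
  have hA1 : A 1 := ⟨w * cs.simple t, by simp [alternatingWord], cs.isRightDescent_iff.mp ht⟩
  have hA_le : ∀ j, A j → j ≤ cs.length w := fun j ⟨_, _, hj⟩ => by omega
  obtain ⟨k, hk, ⟨w', hw, hlen⟩, hAk1⟩ : ∃ k, 1 ≤ k ∧ A k ∧ ¬ A (k + 1) :=
    ⟨_, Nat.le_findGreatest (hA_le 1 hA1) hA1, Nat.findGreatest_spec (hA_le 1 hA1) hA1,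
      fun h => Nat.findGreatest_is_greatest (Nat.lt_succ_self _) (hA_le _ h) h⟩
  obtain ⟨k, rfl⟩ : ∃ k', k = k' + 1 := ⟨k - 1, by omega⟩
  refine ⟨w', k + 1, hw, by omega, fun c hc hdesc => ?_, ?_⟩
  · have hw'c := cs.isRightDescent_iff.mp hdesc
    rcases alternatingWord_eq_cons_or_succ_eq_cons hc k with hcons | hcons
    · refine hAk1 ⟨w' * cs.simple c, ?_, by omega⟩
      rw [hw, hcons, wordProd_cons, mul_assoc, simple_mul_simple_cancel_left]
    · have hfact : w = w' * cs.simple c * cs.wordProd (alternatingWord s t k) := by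
        rw [hw, hcons, wordProd_cons, mul_assoc]
      have hle := cs.length_mul_le (w' * cs.simple c) (cs.wordProd (alternatingWord s t k))
      have hk := cs.length_wordProd_le (alternatingWord s t k)
      rw [← hfact] at hle
      rw [length_alternatingWord] at hk
      omega
  · have hws : w * cs.simple s = w' * cs.wordProd (alternatingWord t s (k + 1 + 1)) := by
      rw [alternatingWord_succ, wordProd_concat, hw, mul_assoc]
    have hle := cs.length_mul_le w' (cs.wordProd (alternatingWord t s (k + 1 + 1)))
    have hge := cs.length_wordProd_le (alternatingWord t s (k + 1 + 1))
    have hs' := cs.not_isRightDescent_iff.mp hs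
    rw [← hws] at hle
    rw [length_alternatingWord] at hge
    rw [IsReduced, length_alternatingWord]
    omega

end CoxeterSystem

namespace Polynomial.Chebyshev

theorem U_eval_cos_pi_div_nonneg {m : ℕ} (hm : 2 ≤ m) {n : ℤ} (h1 : -1 ≤ n) (h2 : n < m) :
    0 ≤ (U ℝ n).eval (Real.cos (Real.pi / m)) := by
  have hm' : (2 : ℝ) ≤ m := by exact_mod_cast hm
  have hsin : 0 < Real.sin (Real.pi / m) :=
    Real.sin_pos_of_pos_of_lt_pi (by positivity) (by
      rw [div_lt_iff₀ (by positivity)]; nlinarith [Real.pi_pos])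
  have hn : (0 : ℝ) ≤ n + 1 := by exact_mod_cast (by omega : (0 : ℤ) ≤ n + 1)
  have hnm : (n : ℝ) + 1 ≤ m := by exact_mod_cast (by omega : n + 1 ≤ (m : ℤ))
  have hsin' : 0 ≤ Real.sin ((n + 1) * (Real.pi / m)) := by
    apply Real.sin_nonneg_of_nonneg_of_le_pi (by positivity)
    calc (n + 1) * (Real.pi / m) ≤ m * (Real.pi / m) := by gcongr
      _ = Real.pi := by field_simp
  rw [← U_real_cos] at hsin'
  exact nonneg_of_mul_nonneg_left hsin' hsin

theorem U_eval_nonneg_of_one_le {x : ℝ} (hx : 1 ≤ x) {n : ℤ} (hn : -1 ≤ n) :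
    0 ≤ (U ℝ n).eval x := by
  have key (k : ℕ) : 0 ≤ (U ℝ (k - 1)).eval x ∧ (U ℝ (k - 1)).eval x ≤ (U ℝ k).eval x := by
    induction k with
    | zero => simp
    | succ k ih =>
      have hrec : (U ℝ (k + 1)).eval x = 2 * x * (U ℝ k).eval x - (U ℝ (k - 1)).eval x := by
        simp [U_add_one]
      push_cast
      simp only [add_sub_cancel_right, hrec]
      constructor <;> nlinarith
  obtain ⟨k, rfl⟩ : ∃ k : ℕ, n = k - 1 := ⟨(n + 1).toNat, by omega⟩
  exact (key k).1

end Polynomial.Chebyshev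

theorem FusionData.star_one (F : FusionData R ι) : F.star 1 = 1 := by
  have hunit : F.unit = F.inv F.unit :=
    (F.c_unit_iff _ _).mp (by rw [F.b_unit, one_mul, ← F.b_unit, F.b.repr_self]; simp)
  rw [← F.b_unit, F.star_basis, ← hunit]

theorem smul_simRoot {R : Type*} [Ring R] {S : Type*} [DecidableEq S] (x : R) (t : S) :
    x • simRoot R t = Pi.single t x := by
  rw [simRoot, ← Pi.single_smul', smul_eq_mul, mul_one]

namespace GeomSetting

open CoxeterSystem Polynomial.Chebyshev

variable (G : GeomSetting R ι S W)

/-- In the finite case this is `cos (π / m_{s,t})`. -/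
def cosAngle (s t : S) : ℝ := -G.FP (G.cartan s t) / 2

theorem FP_cartan_eq_neg_two_mul_cosAngle (s t : S) :
    G.FP (G.cartan s t) = -2 * G.cosAngle s t := by
  rw [cosAngle]; ring

theorem FP_cartan_self (s : S) : G.FP (G.cartan s s) = 2 := by
  rw [cartan, G.cartan_diag, map_ofNat]

theorem cosAngle_comm {s t : S} (hst : s ≠ t) : G.cosAngle t s = G.cosAngle s t := by
  rw [cosAngle, cosAngle, cartan, G.cartan_star s t hst, G.FP_star, cartan]

theorem U_eval_cosAngle_nonneg {s t : S} (hst : s ≠ t) {n : ℤ} (h1 : -1 ≤ n)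
    (h2 : G.M s t ≠ 0 → n < G.M s t) : 0 ≤ (U ℝ n).eval (G.cosAngle s t) := by
  by_cases hM : G.M s t = 0
  · apply U_eval_nonneg_of_one_le _ h1
    have := G.cartan_inf s t hst hM
    rw [cosAngle, cartan]
    linarith
  · have hm : 2 ≤ G.M s t := by
      have := G.M.off_diagonal s t hst
      omega
    rw [cosAngle, cartan, G.cartan_fin s t hst hM, neg_mul, neg_neg,
      mul_div_cancel_left₀ _ two_ne_zero]
    exact U_eval_cos_pi_div_nonneg hm h1 (h2 hM)

theorem B_simRoot_left (s : S) (v : S → R) : G.B (simRoot R s) v = ∑ t, v t * G.cartan s t := by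
  let Bs : (S → R) →+ R := AddMonoidHom.mk' (G.B (simRoot R s)) (G.B_add_right _)
  calc G.B (simRoot R s) v = Bs (∑ t, v t • simRoot R t) := by
        simp only [smul_simRoot, Finset.univ_sum_single]; rfl
    _ = ∑ t, v t * G.cartan s t := by
        rw [map_sum]
        refine Finset.sum_congr rfl fun t _ => ?_
        have := G.B_sesq 1 (v t) s t
        rwa [one_smul, G.FD.star_one, mul_one] at this

theorem FP_rep_simple_apply (s : S) (v : S → R) (u : S) :
    G.FP (G.rep (G.cs.simple s) v u) =
      G.FP (v u) - if u = s then ∑ t, G.FP (v t) * G.FP (G.cartan s t) else 0 := by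
  rw [G.rep_simple, G.B_simRoot_left, smul_simRoot]
  by_cases hu : u = s
  · subst hu; simp
  · simp [hu]

theorem FP_rep_apply (w : W) (v : S → R) (u : S) :
    G.FP (G.rep w v u) = ∑ t, G.FP (v t) * G.FP (G.rep w (simRoot R t) u) := by
  conv_lhs => rw [← Finset.univ_sum_single v]
  simp only [← smul_simRoot, map_sum, map_smul, Finset.sum_apply, Pi.smul_apply, smul_eq_mul,
    map_mul]

theorem FP_comp_rep_simple_of_eq_single {p c : S} (hpc : p ≠ c) {v : S → R} {a b : ℝ}
    (hv : G.FP ∘ v = Pi.single p a + Pi.single c b) :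
    G.FP ∘ G.rep (G.cs.simple c) v =
      Pi.single p a + Pi.single c (-G.FP (G.cartan c p) * a - b) := by
  have hv' (u : S) : G.FP (v u) = (Pi.single p a + Pi.single c b : S → ℝ) u := congrFun hv u
  have hsum : ∑ t, G.FP (v t) * G.FP (G.cartan c t) = a * G.FP (G.cartan c p) + b * 2 := by
    simp [hv', add_mul, Finset.sum_add_distrib, Pi.single_apply, FP_cartan_self]
  funext u
  rw [Function.comp_apply, FP_rep_simple_apply, hsum, hv']
  by_cases hu : u = c
  · subst hu; simp [hpc]; ring
  · simp [hu]

theorem FP_comp_rep_alternatingWord {s t : S} (hst : s ≠ t) (k : ℕ) :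
    G.FP ∘ G.rep (G.cs.wordProd (alternatingWord s t k)) (simRoot R s) =
      Pi.single (if Even k then s else t) ((U ℝ k).eval (G.cosAngle s t)) +
        Pi.single (if Even k then t else s) ((U ℝ (k - 1)).eval (G.cosAngle s t)) := by
  induction k with
  | zero => funext u; simp [simRoot, alternatingWord, Pi.single_apply, apply_ite G.FP]
  | succ k ih =>
    rw [alternatingWord_succ', wordProd_cons, map_mul, LinearEquiv.mul_apply,
      G.FP_comp_rep_simple_of_eq_single _ ih]
    · rw [add_comm, G.FP_cartan_eq_neg_two_mul_cosAngle]
      rcases Nat.even_or_odd k with hk | hk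
      · simp [hk, Nat.even_add_one, U_add_one, G.cosAngle_comm hst]
      · simp [Nat.not_even_iff_odd.mpr hk, Nat.even_add_one, U_add_one]
    · split_ifs <;> simp [hst, hst.symm]

theorem FP_rep_simRoot_nonneg {w : W} {s : S} (hs : ¬ G.cs.IsRightDescent w s) (u : S) :
    0 ≤ G.FP (G.rep w (simRoot R s) u) := by
  induction hn : G.cs.length w using Nat.strong_induction_on generalizing w s with
  | _ n ih =>
  rcases eq_or_ne w 1 with rfl | hw
  · simp only [map_one, simRoot, LinearEquiv.coe_one, id, Pi.single_apply, apply_ite G.FP]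
    split_ifs <;> simp
  obtain ⟨t, ht⟩ := G.cs.exists_rightDescent_of_ne_one hw
  have hst : s ≠ t := by rintro rfl; exact hs ht
  obtain ⟨w', k, rfl, hlt, hw', hred⟩ := G.cs.exists_alternatingWord_suffix hs ht
  have hk : G.M s t ≠ 0 → (k : ℤ) < G.M s t := fun hM => by
    have := mt (G.cs.not_isReduced_alternatingWord t s (by rwa [G.M.symmetric])) (not_not.2 hred)
    rw [G.M.symmetric] at this
    omega
  have hcoef (t' : S) := congrFun (G.FP_comp_rep_alternatingWord hst k) t'
  have hpos (c : S) (hc : c = s ∨ c = t) : 0 ≤ G.FP (G.rep w' (simRoot R c) u) :=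
    ih _ (hn ▸ hlt) (hw' c hc) rfl
  rw [map_mul, LinearEquiv.mul_apply, FP_rep_apply]
  simp only [Function.comp_apply] at hcoef
  simp only [hcoef, Pi.add_apply, add_mul, Finset.sum_add_distrib, Pi.single_apply, ite_mul,
    zero_mul, Finset.sum_ite_eq', Finset.mem_univ, if_true]
  have hU₁ := G.U_eval_cosAngle_nonneg hst (n := k) (by omega) hk
  have hU₂ := G.U_eval_cosAngle_nonneg hst (n := k - 1) (by omega)
    fun hM => (sub_one_lt _).trans (hk hM)
  exact add_nonneg (mul_nonneg hU₁ (hpos (if Even k then s else t) (by split_ifs <;> simp)))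
    (mul_nonneg hU₂ (hpos (if Even k then t else s) (by split_ifs <;> simp)))

theorem rep_simple_simRoot_self (s : S) : G.rep (G.cs.simple s) (simRoot R s) = -simRoot R s := by
  rw [G.rep_simple, G.cartan_diag, two_smul, sub_add_cancel_left]

theorem eq_one_of_FP_rep_simRoot_self {w : W} (h : ∀ s, G.FP (G.rep w (simRoot R s) s) = 1) :
    w = 1 := by
  by_contra hw
  obtain ⟨s, hs⟩ := G.cs.exists_rightDescent_of_ne_one hw
  have hpos := G.FP_rep_simRoot_nonneg (G.cs.isRightDescent_iff_not_isRightDescent_mul.mp hs) s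
  have hneg : G.rep (w * G.cs.simple s) (simRoot R s) = -G.rep w (simRoot R s) := by
    rw [map_mul, LinearEquiv.mul_apply, rep_simple_simRoot_self, map_neg]
  rw [hneg, Pi.neg_apply, map_neg, h s] at hpos
  norm_num at hpos

theorem isRLinearFunctional_FP_apply (u : S) : G.IsRLinearFunctional fun v => G.FP (v u) :=
  ⟨fun _ _ => map_add G.FP _ _, fun _ _ => map_mul G.FP _ _⟩

end GeomSetting

/-- **Corollary 4.5.** The contragredient representation of `W` on `Hom_R(RΛ_S, ℝ)` is
faithful, and the `R`-linear representation of `W` on `RΛ_S` is faithful; in particular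
every geometric `R`-realisation is faithful. -/
theorem geometric_realisation_faithful (G : GeomSetting R ι S W) :
    Function.Injective (fun w : W =>
      fun Z : {Y : (S → R) → ℝ // G.IsRLinearFunctional Y} =>
        fun v : S → R => Z.1 (G.rep w⁻¹ v))
    ∧ Function.Injective G.rep := by
  have hcontra : Function.Injective (fun w : W =>
      fun Z : {Y : (S → R) → ℝ // G.IsRLinearFunctional Y} =>
        fun v : S → R => Z.1 (G.rep w⁻¹ v)) := by
    intro w₁ w₂ h
    refine inv_mul_eq_one.mp (G.eq_one_of_FP_rep_simRoot_self fun s => ?_)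
    have hfix := congrFun (congrFun h ⟨_, G.isRLinearFunctional_FP_apply s⟩)
      (G.rep w₂ (simRoot R s))
    simp only [← LinearEquiv.mul_apply, ← map_mul, inv_mul_cancel, map_one] at hfix
    rw [hfix]
    simp [simRoot]
  exact ⟨hcontra, fun w₁ w₂ h => hcontra (by simp only [map_inv, h])⟩

end
end

section
/- (1) C and Č are closed convex cones, and their topological interiors (in Hom_R(RΛ_S,ℝ) and Hom_ℤ(RΛ_S,ℝ) respectively) are exactly C° and Č°, which are nonempty. (2) For w ∈ W: w·C° ∩ C° ≠ ∅ if and only if w = 1; and for w̌ ∈ W̌: w̌·Č° ∩ Č° ≠ ∅ if and only if w̌ = 1. (3) For each s ∈ S, the set of Z ∈ Hom_R(RΛ_S,ℝ) fixed by s is exactly the hyperplane H_{α_s}, and for each (b,s) ∈ Š, the set of Z ∈ Hom_ℤ(RΛ_S,ℝ) fixed by (b,s) is exactly the hyperplane Ȟ_{b·α_s}. -/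
open scoped BigOperators

noncomputable section

section Hyperplanes

variable {X : Type*} {G : Type*} [Group G]

/-- The closed fundamental cone in coordinates. -/
def coneC (X : Type*) : Set (X → ℝ) := {Z | ∀ x, 0 ≤ Z x}

/-- The open fundamental cone in coordinates. -/
def coneCo (X : Type*) : Set (X → ℝ) := {Z | ∀ x, 0 < Z x}

/-- The coordinate hyperplane (wall) at `x`. -/
def wallH (X : Type*) (x : X) : Set (X → ℝ) := {Z | Z x = 0}

/-- The Tits cone of an action given in coordinates on the dual space. -/
def titsT (rho : G →* ((X → ℝ) ≃ₗ[ℝ] (X → ℝ))) : Set (X → ℝ) :=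
  ⋃ g : G, rho g '' coneC X

/-- The hyperplane system of an action. -/
def hypSys (rho : G →* ((X → ℝ) ≃ₗ[ℝ] (X → ℝ))) : Set (Set (X → ℝ)) :=
  {H | ∃ (g : G) (x : X), H = rho g '' wallH X x}

/-- The complexified hyperplane complement. -/
def omegaReg (rho : G →* ((X → ℝ) ≃ₗ[ℝ] (X → ℝ))) : Set ((X → ℝ) × (X → ℝ)) :=
  (interior (titsT rho) ×ˢ interior (titsT rho)) \ ⋃ H ∈ hypSys rho, H ×ˢ H

end Hyperplanes

/-- The embedding `Hom_R(RΛ_S, ℝ) → Hom_ℤ(RΛ_S, ℝ)` in coordinates: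
`Z(α_s) ↦ (Z(b_i · α_s))_{(i,s)} = (FPdim(b_i) · Z(α_s))_{(i,s)}`. -/
def GeomSetting.emb {R : Type*} [Ring R] {ι : Type*} [Fintype ι] [DecidableEq ι]
    {S : Type*} [Fintype S] [DecidableEq S] {W : Type*} [Group W]
    (G : GeomSetting R ι S W) (Z : S → ℝ) : (ι × S) → ℝ :=
  fun p => G.FP (G.FD.b p.1) * Z p.2

variable {R : Type*} [Ring R] {ι : Type*} [Fintype ι] [DecidableEq ι]
  {S : Type*} [Fintype S] [DecidableEq S] {W : Type*} [Group W]

/-!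
Both halves of (2) are Tits' theorem for a real Cartan matrix `A` adapted to a Coxeter matrix `m`
(`A x x = 2`, `A x y ≤ 0`, and `A x y * A y x = 4 cos² (π / m x y)`, or `≥ 4` when `m x y = ∞`),
with `W` acting on coordinates by `(s_x Z) y = Z y - A x y * Z x`. The positive root theorem says
that `w • α_x` has nonnegative coefficients whenever `ℓ (w s_x) > ℓ w`. By induction on `ℓ w`:
if `t` is a right descent of `w`, split `w = u v` with `v` an alternating word in `s_x, s_t` of
maximal length; then `u` has neither `x` nor `t` as a right descent, `v` is shorter than the braid
relation, and `v • α_x = X α_x - A t x Z α_t` with explicit Chebyshev-type coefficients `X, Z ≥ 0`.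
If now `w ≠ 1` has right descent `x`, then `w • α_x = -(w s_x) • α_x` is nonpositive, so no `Z`
with `Z > 0` can have `w • Z ≥ 0`.

For `W` the Cartan matrix is `FPdim (r s t)`, symmetric because `FPdim` commutes with `*`. For `W̌`
it is `ř`; the Coxeter relations of `W̌`, holding in its action, force `ř p q = 0 ↔ ř q p = 0` and
`ř p q = -1 ↔ ř q p = -1`, so `m̌` is a Coxeter matrix and `W̌` is a Coxeter group.
-/

open Real

section Cones

variable (X : Type*)

theorem coneC_eq_pi : coneC X = Set.univ.pi fun _ => Set.Ici 0 := by
  ext; simp only [coneC, Set.mem_ofPred_eq, Set.mem_pi, Set.mem_univ, Set.mem_Ici, forall_const]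

theorem coneCo_eq_pi : coneCo X = Set.univ.pi fun _ => Set.Ioi 0 := by
  ext; simp only [coneCo, Set.mem_ofPred_eq, Set.mem_pi, Set.mem_univ, Set.mem_Ioi, forall_const]

theorem isClosed_coneC : IsClosed (coneC X) :=
  coneC_eq_pi X ▸ isClosed_set_pi fun _ _ => isClosed_Ici

theorem convex_coneC : Convex ℝ (coneC X) :=
  coneC_eq_pi X ▸ convex_pi fun _ _ => convex_Ici 0

theorem smul_mem_coneC {Z : X → ℝ} (hZ : Z ∈ coneC X) {a : ℝ} (ha : 0 ≤ a) :
    a • Z ∈ coneC X :=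
  fun x => mul_nonneg ha (hZ x)

theorem interior_coneC [Finite X] : interior (coneC X) = coneCo X := by
  rw [coneC_eq_pi, interior_pi_set Set.finite_univ, coneCo_eq_pi]
  simp only [interior_Ici]

theorem coneCo_nonempty : (coneCo X).Nonempty :=
  ⟨1, fun _ => one_pos⟩

end Cones

section DihedralCoeff

/-- With `c = A x t * A t x`, the alternating word `v_k` in `s_x, s_t` of length `k` ending in
`s_t` maps `α_x` to `X_k α_x - A t x Z_k α_t`, where `(X_k, Z_k) = dihedralCoeff c k`. -/
def dihedralCoeff (c : ℝ) : ℕ → ℝ × ℝ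
  | 0 => (1, 0)
  | k + 1 =>
    if Even k then ((dihedralCoeff c k).1, (dihedralCoeff c k).1 - (dihedralCoeff c k).2)
    else (c * (dihedralCoeff c k).2 - (dihedralCoeff c k).1, (dihedralCoeff c k).2)

variable {c : ℝ} {k : ℕ}

theorem dihedralCoeff_succ_of_even (hk : Even k) :
    dihedralCoeff c (k + 1) =
      ((dihedralCoeff c k).1, (dihedralCoeff c k).1 - (dihedralCoeff c k).2) := by
  rw [dihedralCoeff, if_pos hk]

theorem dihedralCoeff_succ_of_not_even (hk : ¬Even k) :
    dihedralCoeff c (k + 1) =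
      (c * (dihedralCoeff c k).2 - (dihedralCoeff c k).1, (dihedralCoeff c k).2) := by
  rw [dihedralCoeff, if_neg hk]

theorem dihedralCoeff_nonneg_of_le_one (c : ℝ) (hk : k ≤ 1) :
    0 ≤ (dihedralCoeff c k).1 ∧ 0 ≤ (dihedralCoeff c k).2 := by
  interval_cases k <;> norm_num [dihedralCoeff]

theorem dihedralCoeff_invariant_of_four_le (hc : 4 ≤ c) (k : ℕ) :
    (Even k → 0 ≤ (dihedralCoeff c k).2 ∧ 1 ≤ (dihedralCoeff c k).1 - (dihedralCoeff c k).2 ∧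
      c * (dihedralCoeff c k).2 ≤ (c - 2) * (dihedralCoeff c k).1) ∧
    (¬Even k → 1 ≤ (dihedralCoeff c k).1 ∧ 1 ≤ (dihedralCoeff c k).2 ∧
      2 * (dihedralCoeff c k).1 ≤ c * (dihedralCoeff c k).2) := by
  induction k with
  | zero => norm_num [dihedralCoeff]; linarith
  | succ k ih =>
    by_cases hk : Even k
    · obtain ⟨hZ, hXZ, hc'⟩ := ih.1 hk
      have hk' : ¬Even (k + 1) := by simpa [Nat.even_add_one] using hk
      refine ⟨fun h => absurd h hk', fun _ => ?_⟩
      rw [dihedralCoeff_succ_of_even hk]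
      exact ⟨by linarith, hXZ, by nlinarith⟩
    · obtain ⟨hX, hZ, hc'⟩ := ih.2 hk
      have hk' : Even (k + 1) := by simpa [Nat.even_add_one] using hk
      refine ⟨fun _ => ?_, fun h => absurd hk' h⟩
      rw [dihedralCoeff_succ_of_not_even hk]
      exact ⟨by linarith, by nlinarith, by nlinarith⟩

theorem dihedralCoeff_nonneg_of_four_le (hc : 4 ≤ c) (k : ℕ) :
    0 ≤ (dihedralCoeff c k).1 ∧ 0 ≤ (dihedralCoeff c k).2 := by
  by_cases hk : Even k
  · obtain ⟨hZ, hXZ, -⟩ := (dihedralCoeff_invariant_of_four_le hc k).1 hk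
    exact ⟨by linarith, hZ⟩
  · obtain ⟨hX, hZ, -⟩ := (dihedralCoeff_invariant_of_four_le hc k).2 hk
    exact ⟨by linarith, by linarith⟩

theorem sin_three_term_recurrence (k θ : ℝ) :
    sin ((k + 2) * θ) = 2 * cos θ * sin ((k + 1) * θ) - sin (k * θ) := by
  have h₁ : (k + 2) * θ = (k + 1) * θ + θ := by ring
  have h₂ : k * θ = (k + 1) * θ - θ := by ring
  rw [h₁, h₂, sin_add, sin_sub]
  ring

theorem dihedralCoeff_four_mul_cos_sq {θ : ℝ} (hs : sin θ ≠ 0) (hc : cos θ ≠ 0) (k : ℕ) :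
    dihedralCoeff (4 * cos θ ^ 2) k =
      if Even k then (sin ((k + 1) * θ) / sin θ, sin (k * θ) / sin (2 * θ))
      else (sin (k * θ) / sin θ, sin ((k + 1) * θ) / sin (2 * θ)) := by
  induction k with
  | zero => simp [dihedralCoeff, hs]
  | succ k ih =>
    have hrec := sin_three_term_recurrence k θ
    push_cast
    rw [add_assoc, one_add_one_eq_two]
    by_cases hk : Even k
    · have hk' : ¬Even (k + 1) := by simpa [Nat.even_add_one] using hk
      rw [dihedralCoeff_succ_of_even hk, ih, if_pos hk, if_neg hk', hrec, sin_two_mul]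
      simp only [Prod.mk.injEq, true_and]
      field_simp
    · have hk' : Even (k + 1) := by simpa [Nat.even_add_one] using hk
      rw [dihedralCoeff_succ_of_not_even hk, ih, if_neg hk, if_pos hk', hrec, sin_two_mul]
      simp only [Prod.mk.injEq, and_true]
      field_simp
      ring

theorem dihedralCoeff_nonneg_of_lt {m : ℕ} (hm : 3 ≤ m) (hk : k < m) :
    0 ≤ (dihedralCoeff (4 * cos (π / m) ^ 2) k).1 ∧
      0 ≤ (dihedralCoeff (4 * cos (π / m) ^ 2) k).2 := by
  have hm' : (3 : ℝ) ≤ m := by exact_mod_cast hm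
  have hθ : 0 < π / m := by positivity
  have hsin_nonneg : ∀ j : ℕ, j ≤ m → 0 ≤ sin (j * (π / m)) := fun j hj =>
    sin_nonneg_of_nonneg_of_le_pi (by positivity) <| by
      rw [← le_div_iff₀ hθ, div_div_cancel₀ pi_pos.ne']
      exact_mod_cast hj
  have hsin : 0 < sin (π / m) := sin_pos_of_pos_of_lt_pi hθ (div_lt_self pi_pos (by linarith))
  have hcos : 0 < cos (π / m) := cos_pos_of_mem_Ioo ⟨by linarith [pi_pos], by
    rw [div_lt_div_iff_of_pos_left pi_pos (by positivity) two_pos]; linarith⟩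
  have hsin2 : 0 < sin (2 * (π / m)) := by rw [sin_two_mul]; positivity
  have hk₁ := hsin_nonneg (k + 1) hk
  have hk₀ := hsin_nonneg k hk.le
  push_cast at hk₁
  rw [dihedralCoeff_four_mul_cos_sq hsin.ne' hcos.ne']
  split_ifs <;> exact ⟨by positivity, by positivity⟩

end DihedralCoeff

namespace CoxeterSystem

variable {B : Type*} {M : CoxeterMatrix B} (cs : CoxeterSystem M W)

theorem exists_maximal_alternating_split {w u : W} {x t : B} {k : ℕ}
    (hw : w = u * cs.wordProd (alternatingWord x t k)) (hℓ : cs.length w = cs.length u + k) :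
    ∃ u' k', k ≤ k' ∧ w = u' * cs.wordProd (alternatingWord x t k') ∧
      cs.length w = cs.length u' + k' ∧ ¬cs.IsRightDescent u' (if Even k' then t else x) := by
  induction hn : cs.length u using Nat.strong_induction_on generalizing u k with
  | _ n ih =>
    by_cases hdesc : cs.IsRightDescent u (if Even k then t else x)
    · have hlen := cs.isRightDescent_iff.mp hdesc
      have hw' : w = u * cs.simple (if Even k then t else x) *
          cs.wordProd (alternatingWord x t (k + 1)) := by
        rw [alternatingWord_succ', wordProd_cons, ← mul_assoc, simple_mul_simple_cancel_right, hw]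
      obtain ⟨u', k', hk, h⟩ := ih _ (by omega) hw' (by omega) rfl
      exact ⟨u', k', by omega, h⟩
    · exact ⟨u, k, le_rfl, hw, hℓ, hdesc⟩

theorem not_isRightDescent_of_alternating_split {w u : W} {x t : B} {k : ℕ}
    (hw : w = u * cs.wordProd (alternatingWord x t (k + 1)))
    (hℓ : cs.length w = cs.length u + (k + 1)) :
    ¬cs.IsRightDescent u (if Even k then t else x) := by
  have hw' : w = u * cs.simple (if Even k then t else x) * cs.wordProd (alternatingWord x t k) := by
    rw [hw, alternatingWord_succ', wordProd_cons, mul_assoc]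
  have h₁ := cs.length_mul_le (u * cs.simple (if Even k then t else x))
    (cs.wordProd (alternatingWord x t k))
  have h₂ := cs.length_wordProd_le (alternatingWord x t k)
  rw [← hw'] at h₁
  rw [length_alternatingWord] at h₂
  unfold IsRightDescent
  omega

theorem lt_of_alternating_split {w u : W} {x t : B} {k : ℕ}
    (hw : w = u * cs.wordProd (alternatingWord x t k)) (hℓ : cs.length w = cs.length u + k)
    (hx : ¬cs.IsRightDescent w x) (hM : M x t ≠ 0) : k < M x t := by
  have hred : cs.IsReduced (alternatingWord x t k) := by
    have h₁ := cs.length_mul_le u (cs.wordProd (alternatingWord x t k))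
    have h₂ := cs.length_wordProd_le (alternatingWord x t k)
    rw [← hw] at h₁
    rw [length_alternatingWord] at h₂
    rw [IsReduced, length_alternatingWord]
    omega
  refine lt_of_le_of_ne (not_lt.mp fun h => cs.not_isReduced_alternatingWord x t hM h hred) ?_
  -- at `k = M x t` the braid relation rewrites the suffix to end in `s_x`, so `x` is a descent
  rintro rfl
  obtain ⟨m, hm⟩ : ∃ m, M x t = m + 1 := Nat.exists_eq_succ_of_ne_zero hM
  have hbraid : cs.wordProd (alternatingWord x t (M x t)) =
      cs.wordProd (alternatingWord x t m) * cs.simple x := by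
    have h := cs.wordProd_braidWord_eq x t
    rw [braidWord, braidWord, M.symmetric t x, hm, alternatingWord_succ t x m,
      wordProd_concat] at h
    rw [hm, h]
  have hwx : w * cs.simple x = u * cs.wordProd (alternatingWord x t m) := by
    rw [hw, hbraid, ← mul_assoc, simple_mul_simple_cancel_right]
  have h₁ := cs.length_mul_le u (cs.wordProd (alternatingWord x t m))
  have h₂ := cs.length_wordProd_le (alternatingWord x t m)
  rw [← hwx] at h₁
  rw [length_alternatingWord] at h₂
  exact hx (by unfold IsRightDescent; omega)

theorem exists_alternating_split {w : W} {x t : B} (ht : cs.IsRightDescent w t)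
    (hx : ¬cs.IsRightDescent w x) :
    ∃ u k, w = u * cs.wordProd (alternatingWord x t (k + 1)) ∧ cs.length u < cs.length w ∧
      ¬cs.IsRightDescent u x ∧ ¬cs.IsRightDescent u t ∧ (M x t = 0 ∨ k + 1 < M x t) := by
  have hw : w = w * cs.simple t * cs.wordProd (alternatingWord x t 1) := by
    rw [show alternatingWord x t 1 = [t] from rfl, wordProd_singleton,
      simple_mul_simple_cancel_right]
  obtain ⟨u, k', hk', hwu, hℓ, hlast⟩ :=
    cs.exists_maximal_alternating_split hw (cs.isRightDescent_iff.mp ht).symm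
  obtain ⟨k, rfl⟩ : ∃ k, k' = k + 1 := ⟨k' - 1, by omega⟩
  have hfirst := cs.not_isRightDescent_of_alternating_split hwu hℓ
  have hxt : ¬cs.IsRightDescent u x ∧ ¬cs.IsRightDescent u t := by
    by_cases hk : Even k
    · rw [if_neg (by simpa [Nat.even_add_one] using hk)] at hlast
      rw [if_pos hk] at hfirst
      exact ⟨hlast, hfirst⟩
    · rw [if_pos (by simpa [Nat.even_add_one] using hk)] at hlast
      rw [if_neg hk] at hfirst
      exact ⟨hfirst, hlast⟩
  refine ⟨u, k, hwu, by omega, hxt.1, hxt.2, ?_⟩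
  exact or_iff_not_imp_left.mpr (cs.lt_of_alternating_split hwu hℓ hx)

end CoxeterSystem

structure CoxeterMatrix.IsCartan {B : Type*} (M : CoxeterMatrix B) (A : B → B → ℝ) : Prop where
  diag : ∀ x, A x x = 2
  nonpos : ∀ x y, x ≠ y → A x y ≤ 0
  mul_eq_of_ne_zero : ∀ x y, x ≠ y → M x y ≠ 0 → A x y * A y x = 4 * cos (π / M x y) ^ 2
  four_le_mul_of_eq_zero : ∀ x y, x ≠ y → M x y = 0 → 4 ≤ A x y * A y x

theorem CoxeterMatrix.IsCartan.dihedralCoeff_nonneg {B : Type*} {M : CoxeterMatrix B}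
    {A : B → B → ℝ} (hA : M.IsCartan A) {x t : B} (hxt : x ≠ t) {k : ℕ}
    (hk : M x t = 0 ∨ k < M x t) :
    0 ≤ (dihedralCoeff (A x t * A t x) k).1 ∧ 0 ≤ (dihedralCoeff (A x t * A t x) k).2 := by
  rcases hk with hM | hk
  · exact dihedralCoeff_nonneg_of_four_le (hA.four_le_mul_of_eq_zero x t hxt hM) k
  by_cases hk₁ : k ≤ 1
  · exact dihedralCoeff_nonneg_of_le_one _ hk₁
  rw [hA.mul_eq_of_ne_zero x t hxt (by omega)]
  exact dihedralCoeff_nonneg_of_lt (by omega) hk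

theorem setOf_simple_fixed_eq_wallH {B : Type*} {M : CoxeterMatrix B} (cs : CoxeterSystem M W)
    {A : B → B → ℝ} {ρ : W →* ((B → ℝ) ≃ₗ[ℝ] (B → ℝ))}
    (hρ : ∀ x Z y, ρ (cs.simple x) Z y = Z y - A x y * Z x) {x : B} (hx : A x x ≠ 0) :
    {Z : B → ℝ | ρ (cs.simple x) Z = Z} = wallH B x := by
  ext Z
  simp only [Set.mem_ofPred_eq, wallH]
  constructor
  · intro h
    have hZx := congrFun h x
    rw [hρ, sub_eq_self] at hZx
    exact (mul_eq_zero.mp hZx).resolve_left hx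
  · intro h
    funext y
    rw [hρ, h, mul_zero, sub_zero]

section ReflectionPairs

variable {B : Type*} [DecidableEq B] {A : B → B → ℝ} {p q : B}
  {σp σq : (B → ℝ) ≃ₗ[ℝ] (B → ℝ)}

theorem cartan_eq_zero_of_mul_sq_eq_one (hpq : p ≠ q) (hσp : ∀ Z y, σp Z y = Z y - A p y * Z p)
    (hσq : ∀ Z y, σq Z y = Z y - A q y * Z q) (hp : A p p = 2) (hq : A q q = 2)
    (hrel : (σp * σq) ^ 2 = 1) (h : A p q = 0) : A q p = 0 := by
  have := congrArg (fun σ => σ (Pi.single q 1) p) hrel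
  simp [pow_succ, hσp, hσq, hpq, hp, hq, h] at this
  linarith

theorem cartan_eq_neg_one_of_mul_pow_three_eq_one (hpq : p ≠ q)
    (hσp : ∀ Z y, σp Z y = Z y - A p y * Z p) (hσq : ∀ Z y, σq Z y = Z y - A q y * Z q)
    (hp : A p p = 2) (hq : A q q = 2) (hrel : (σp * σq) ^ 3 = 1) (h : A p q = -1) :
    A q p = -1 := by
  have h₁ := congrArg (fun σ => σ (Pi.single p 1) p) hrel
  have h₂ := congrArg (fun σ => σ (Pi.single p 1) q) hrel
  simp [pow_succ, hσp, hσq, hpq.symm, hp, hq, h] at h₁ h₂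
  nlinarith

end ReflectionPairs

section RootCoeff

open CoxeterSystem

variable {B : Type*} [DecidableEq B] (ρ : W →* ((B → ℝ) ≃ₗ[ℝ] (B → ℝ)))

/-- The coefficient of `α_y` in `w • α_x`, read off from the contragredient action on
coordinates. -/
def rootCoeff (w : W) (x y : B) : ℝ :=
  ρ w⁻¹ (Pi.single y 1) x

theorem apply_inv_eq_sum_rootCoeff [Fintype B] (w : W) (Z : B → ℝ) (x : B) :
    ρ w⁻¹ Z x = ∑ y, Z y * rootCoeff ρ w x y := by
  conv_lhs => rw [← Finset.univ_sum_single Z, map_sum, Finset.sum_apply]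
  refine Finset.sum_congr rfl fun y _ => ?_
  have h : Pi.single y (Z y) = Z y • (Pi.single y 1 : B → ℝ) := by
    rw [← Pi.single_smul', smul_eq_mul, mul_one]
  rw [h, map_smul, Pi.smul_apply, smul_eq_mul, rootCoeff]

theorem rootCoeff_one_nonneg (x y : B) : 0 ≤ rootCoeff ρ 1 x y := by
  rw [rootCoeff, inv_one, map_one, LinearEquiv.coe_one, id, Pi.single_apply]
  split_ifs <;> norm_num

variable {M : CoxeterMatrix B} (cs : CoxeterSystem M W) {A : B → B → ℝ} {ρ}

theorem rootCoeff_mul_simple (hρ : ∀ x Z y, ρ (cs.simple x) Z y = Z y - A x y * Z x)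
    (w : W) (i x y : B) :
    rootCoeff ρ (w * cs.simple i) x y = rootCoeff ρ w x y - A i x * rootCoeff ρ w i y := by
  rw [rootCoeff, mul_inv_rev, cs.inv_simple, map_mul, LinearEquiv.mul_apply, hρ]
  rfl

theorem rootCoeff_mul_alternatingWord (hdiag : ∀ x, A x x = 2)
    (hρ : ∀ x Z y, ρ (cs.simple x) Z y = Z y - A x y * Z x) (x t : B) (k : ℕ) (g : W) (y : B) :
    rootCoeff ρ (g * cs.wordProd (alternatingWord x t k)) x y =
      (dihedralCoeff (A x t * A t x) k).1 * rootCoeff ρ g x y +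
        -A t x * (dihedralCoeff (A x t * A t x) k).2 * rootCoeff ρ g t y := by
  induction k generalizing g with
  | zero => simp [alternatingWord, dihedralCoeff]
  | succ k ih =>
    rw [alternatingWord_succ', wordProd_cons, ← mul_assoc, ih]
    by_cases hk : Even k
    · rw [if_pos hk, dihedralCoeff_succ_of_even hk, rootCoeff_mul_simple cs hρ,
        rootCoeff_mul_simple cs hρ, hdiag]
      ring
    · rw [if_neg hk, dihedralCoeff_succ_of_not_even hk, rootCoeff_mul_simple cs hρ,
        rootCoeff_mul_simple cs hρ, hdiag]
      ring

theorem rootCoeff_nonneg (hA : M.IsCartan A)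
    (hρ : ∀ x Z y, ρ (cs.simple x) Z y = Z y - A x y * Z x) {w : W} {x : B}
    (hx : ¬cs.IsRightDescent w x) (y : B) : 0 ≤ rootCoeff ρ w x y := by
  induction hn : cs.length w using Nat.strong_induction_on generalizing w x with
  | _ n ih =>
    obtain rfl | hw := eq_or_ne w 1
    · exact rootCoeff_one_nonneg ρ x y
    obtain ⟨t, ht⟩ := cs.exists_rightDescent_of_ne_one hw
    have hxt : x ≠ t := by rintro rfl; exact hx ht
    obtain ⟨u, k, rfl, hlen, hux, hut, hk⟩ := cs.exists_alternating_split ht hx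
    obtain ⟨hX, hZ⟩ := hA.dihedralCoeff_nonneg hxt hk
    have hAtx := neg_nonneg.mpr (hA.nonpos t x hxt.symm)
    rw [rootCoeff_mul_alternatingWord cs hA.diag hρ]
    exact add_nonneg (mul_nonneg hX (ih _ (hn ▸ hlen) hux rfl))
      (mul_nonneg (mul_nonneg hAtx hZ) (ih _ (hn ▸ hlen) hut rfl))

theorem eq_one_of_apply_mem_coneC [Fintype B] (hA : M.IsCartan A)
    (hρ : ∀ x Z y, ρ (cs.simple x) Z y = Z y - A x y * Z x) {w : W} {Z : B → ℝ}
    (hZ : Z ∈ coneCo B) (hwZ : ρ w Z ∈ coneC B) : w = 1 := by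
  by_contra hw
  obtain ⟨x, hx⟩ := cs.exists_rightDescent_of_ne_one hw
  have hu : ¬cs.IsRightDescent (w * cs.simple x) x :=
    cs.isRightDescent_iff_not_isRightDescent_mul.mp hx
  have hneg : ∀ y, rootCoeff ρ w x y = -rootCoeff ρ (w * cs.simple x) x y := fun y => by
    rw [rootCoeff_mul_simple cs hρ, hA.diag]
    ring
  have hsum : Z x = ∑ y, ρ w Z y * rootCoeff ρ w x y := by
    rw [← apply_inv_eq_sum_rootCoeff, ← LinearEquiv.mul_apply, ← map_mul, inv_mul_cancel,
      map_one, LinearEquiv.coe_one, id]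
  have hZx : Z x ≤ 0 := by
    rw [hsum]
    refine Finset.sum_nonpos fun y _ => ?_
    rw [hneg]
    exact mul_nonpos_of_nonneg_of_nonpos (hwZ y)
      (neg_nonpos.mpr (rootCoeff_nonneg cs hA hρ hu y))
  exact (hZ x).not_ge hZx

theorem image_coneCo_inter_coneCo_nonempty_iff [Fintype B] (hA : M.IsCartan A)
    (hρ : ∀ x Z y, ρ (cs.simple x) Z y = Z y - A x y * Z x) (w : W) :
    ((ρ w '' coneCo B) ∩ coneCo B).Nonempty ↔ w = 1 := by
  constructor
  · rintro ⟨_, ⟨Z, hZ, rfl⟩, hwZ⟩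
    exact eq_one_of_apply_mem_coneC cs hA hρ hZ fun x => (hwZ x).le
  · rintro rfl
    obtain ⟨Z, hZ⟩ := coneCo_nonempty B
    exact ⟨Z, ⟨Z, hZ, by simp⟩, hZ⟩

end RootCoeff

theorem FusionData.nonneg_basis_mul (F : FusionData R ι) {r : R} (hr : F.nonneg r) (j : ι) :
    F.nonneg (F.b j * r) := by
  intro i
  rw [← F.b.sum_repr r, Finset.mul_sum, map_sum, Finset.sum_apply']
  refine Finset.sum_nonneg fun k _ => ?_
  rw [mul_smul_comm, map_zsmul, Finsupp.smul_apply, smul_eq_mul]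
  exact mul_nonneg (hr k) (F.c_nonneg j k i)

namespace GeomSetting

variable (G : GeomSetting R ι S W)

theorem FP_nonneg {r : R} (hr : G.FD.nonneg r) : 0 ≤ G.FP r := by
  rw [← G.FD.b.sum_repr r, map_sum]
  refine Finset.sum_nonneg fun i _ => ?_
  rw [map_zsmul, zsmul_eq_mul]
  exact mul_nonneg (by exact_mod_cast hr i) (zero_le_one.trans (G.FP_basis i))

theorem FP_cartan_comm {s t : S} (hst : s ≠ t) : G.FP (G.cartan t s) = G.FP (G.cartan s t) := by
  rw [cartan, G.cartan_star s t hst, G.FP_star, cartan]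

theorem isCartan_FP_cartan : G.M.IsCartan fun s t => G.FP (G.cartan s t) where
  diag s := by rw [cartan, G.cartan_diag, map_ofNat]
  nonpos s t hst := by
    have h := G.FP_nonneg (G.cartan_nonneg s t hst)
    rw [map_neg] at h
    exact neg_nonneg.mp h
  mul_eq_of_ne_zero s t hst hM := by
    rw [G.FP_cartan_comm hst, cartan, G.cartan_fin s t hst hM]
    ring
  four_le_mul_of_eq_zero s t hst hM := by
    have h := G.cartan_inf s t hst hM
    rw [G.FP_cartan_comm hst, cartan]
    nlinarith

theorem rcheck_self (p : ι × S) : G.rcheck p p = 2 := by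
  simp [rcheck]

theorem rcheck_nonpos {p q : ι × S} (hpq : p ≠ q) : G.rcheck p q ≤ 0 := by
  unfold rcheck
  split_ifs with hs hi
  · exact absurd (Prod.ext hi hs) hpq
  · exact le_rfl
  · have h := G.FD.nonneg_basis_mul (G.cartan_nonneg p.2 q.2 hs) q.1 p.1
    rw [mul_neg, map_neg, Finsupp.neg_apply] at h
    exact neg_nonneg.mp h

theorem mcheck_cases {p q : ι × S} (hpq : p ≠ q) :
    G.mcheck p q = 2 ∧ G.rcheck p q = 0 ∨ G.mcheck p q = 3 ∧ G.rcheck p q = -1 ∨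
      G.mcheck p q = 0 ∧ G.rcheck p q ≤ -2 := by
  have := G.rcheck_nonpos hpq
  rw [mcheck, if_neg hpq]
  split_ifs <;> omega

theorem gen_mul_gen_pow_mcheck (p q : ι × S) : (G.gen p * G.gen q) ^ G.mcheck p q = 1 :=
  PresentedGroup.one_of_mem ⟨(p, q), rfl⟩

section Unfolded

variable {G} {rhoF : G.Wcheck →* (((ι × S) → ℝ) ≃ₗ[ℝ] ((ι × S) → ℝ))}

theorem rcheck_symm_of_rep
    (hrhoF : ∀ p Z q, rhoF (G.gen p) Z q = Z q - (G.rcheck p q : ℝ) * Z p)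
    {p q : ι × S} (hpq : p ≠ q) :
    (G.rcheck p q = 0 → G.rcheck q p = 0) ∧ (G.rcheck p q = -1 → G.rcheck q p = -1) := by
  have hdiag : ∀ p, (G.rcheck p p : ℝ) = 2 := fun p => by rw [G.rcheck_self]; norm_num
  have hrel := congrArg rhoF (G.gen_mul_gen_pow_mcheck p q)
  rw [map_pow, map_mul, map_one] at hrel
  constructor
  · intro h
    rw [mcheck, if_neg hpq, if_pos h] at hrel
    exact_mod_cast cartan_eq_zero_of_mul_sq_eq_one (A := fun p q => (G.rcheck p q : ℝ)) hpq
      (hrhoF p) (hrhoF q) (hdiag p) (hdiag q) hrel (by exact_mod_cast h)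
  · intro h
    rw [mcheck, if_neg hpq, if_neg (by omega), if_pos h] at hrel
    exact_mod_cast cartan_eq_neg_one_of_mul_pow_three_eq_one
      (A := fun p q => (G.rcheck p q : ℝ)) hpq (hrhoF p) (hrhoF q) (hdiag p) (hdiag q) hrel
      (by exact_mod_cast h)

theorem mcheck_symm_of_rep
    (hrhoF : ∀ p Z q, rhoF (G.gen p) Z q = Z q - (G.rcheck p q : ℝ) * Z p) (p q : ι × S) :
    G.mcheck p q = G.mcheck q p := by
  obtain rfl | hpq := eq_or_ne p q
  · rfl
  have h₀ : G.rcheck p q = 0 ↔ G.rcheck q p = 0 :=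
    ⟨(rcheck_symm_of_rep hrhoF hpq).1, (rcheck_symm_of_rep hrhoF hpq.symm).1⟩
  have h₁ : G.rcheck p q = -1 ↔ G.rcheck q p = -1 :=
    ⟨(rcheck_symm_of_rep hrhoF hpq).2, (rcheck_symm_of_rep hrhoF hpq.symm).2⟩
  simp only [mcheck, if_neg hpq, if_neg hpq.symm, h₀, h₁]

end Unfolded

theorem rcheck_cases_of_mcheck_symm (hm : ∀ p q, G.mcheck p q = G.mcheck q p) {p q : ι × S}
    (hpq : p ≠ q) :
    G.mcheck p q = 2 ∧ G.rcheck p q = 0 ∧ G.rcheck q p = 0 ∨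
      G.mcheck p q = 3 ∧ G.rcheck p q = -1 ∧ G.rcheck q p = -1 ∨
      G.mcheck p q = 0 ∧ G.rcheck p q ≤ -2 ∧ G.rcheck q p ≤ -2 := by
  have := hm p q
  rcases G.mcheck_cases hpq with ⟨h, hr⟩ | ⟨h, hr⟩ | ⟨h, hr⟩ <;>
    rcases G.mcheck_cases hpq.symm with ⟨h', hr'⟩ | ⟨h', hr'⟩ | ⟨h', hr'⟩ <;> omega

variable (hm : ∀ p q, G.mcheck p q = G.mcheck q p)

def mcheckMatrix : CoxeterMatrix (ι × S) where
  M := Matrix.of G.mcheck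
  isSymm := Matrix.IsSymm.ext fun p q => hm q p
  diagonal p := by simp [mcheck]
  off_diagonal p q hpq := by
    rcases G.mcheck_cases hpq with ⟨h, -⟩ | ⟨h, -⟩ | ⟨h, -⟩ <;> simp [h]

-- `W̌` is literally the presented group of `m̌`, so the simple reflections are the `gen p`.
def unfoldedCoxeterSystem : CoxeterSystem (G.mcheckMatrix hm) G.Wcheck :=
  ⟨MulEquiv.refl _⟩

theorem isCartan_rcheck : (G.mcheckMatrix hm).IsCartan fun p q => (G.rcheck p q : ℝ) where
  diag p := by simp [rcheck_self]
  nonpos p q hpq := by exact_mod_cast G.rcheck_nonpos hpq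
  mul_eq_of_ne_zero p q hpq hM := by
    change G.mcheck p q ≠ 0 at hM
    change _ = 4 * cos (π / (G.mcheck p q : ℝ)) ^ 2
    rcases G.rcheck_cases_of_mcheck_symm hm hpq with ⟨h, hr, hr'⟩ | ⟨h, hr, hr'⟩ | ⟨h, -⟩
    · simp [h, hr, hr', cos_pi_div_two]
    · norm_num [h, hr, hr', cos_pi_div_three]
    · exact absurd h hM
  four_le_mul_of_eq_zero p q hpq hM := by
    change G.mcheck p q = 0 at hM
    rcases G.rcheck_cases_of_mcheck_symm hm hpq with ⟨h, -⟩ | ⟨h, -⟩ | ⟨-, hr, hr'⟩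
    · omega
    · omega
    · exact_mod_cast (by nlinarith : (4 : ℤ) ≤ G.rcheck p q * G.rcheck q p)

end GeomSetting

/-- **Proposition 4.14 (two Vinberg systems).** The fundamental cones `C` and `Č` are
closed convex cones whose interiors are `C°` and `Č°`; the actions of `W` and `W̌` are
simply transitive on translates of the open fundamental chambers; and the fixed-point set
of each generator is exactly the corresponding wall. -/
theorem two_vinberg_systems (G : GeomSetting R ι S W)
    (rhoE : W →* ((S → ℝ) ≃ₗ[ℝ] (S → ℝ)))
    (hrhoE : ∀ (s : S) (Z : S → ℝ) (t : S),
      rhoE (G.cs.simple s) Z t = Z t - G.FP (G.cartan s t) * Z s)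
    (rhoF : G.Wcheck →* (((ι × S) → ℝ) ≃ₗ[ℝ] ((ι × S) → ℝ)))
    (hrhoF : ∀ (p : ι × S) (Z : (ι × S) → ℝ) (q : ι × S),
      rhoF (G.gen p) Z q = Z q - (G.rcheck p q : ℝ) * Z p) :
    (IsClosed (coneC S) ∧ Convex ℝ (coneC S)
      ∧ (∀ Z ∈ coneC S, ∀ a : ℝ, 0 ≤ a → a • Z ∈ coneC S)
      ∧ interior (coneC S) = coneCo S ∧ (coneCo S).Nonempty)
    ∧ (IsClosed (coneC (ι × S)) ∧ Convex ℝ (coneC (ι × S))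
      ∧ (∀ Z ∈ coneC (ι × S), ∀ a : ℝ, 0 ≤ a → a • Z ∈ coneC (ι × S))
      ∧ interior (coneC (ι × S)) = coneCo (ι × S) ∧ (coneCo (ι × S)).Nonempty)
    ∧ (∀ w : W, ((rhoE w '' coneCo S) ∩ coneCo S).Nonempty ↔ w = 1)
    ∧ (∀ w : G.Wcheck, ((rhoF w '' coneCo (ι × S)) ∩ coneCo (ι × S)).Nonempty ↔ w = 1)
    ∧ (∀ s : S, {Z : S → ℝ | rhoE (G.cs.simple s) Z = Z} = wallH S s)
    ∧ (∀ p : ι × S, {Z : (ι × S) → ℝ | rhoF (G.gen p) Z = Z} = wallH (ι × S) p) := by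
  have hm := G.mcheck_symm_of_rep hrhoF
  have hE := G.isCartan_FP_cartan
  have hF := G.isCartan_rcheck hm
  refine ⟨⟨isClosed_coneC S, convex_coneC S, fun Z hZ a ha => smul_mem_coneC S hZ ha,
      interior_coneC S, coneCo_nonempty S⟩,
    ⟨isClosed_coneC _, convex_coneC _, fun Z hZ a ha => smul_mem_coneC _ hZ ha,
      interior_coneC _, coneCo_nonempty _⟩,
    image_coneCo_inter_coneCo_nonempty_iff G.cs hE hrhoE,
    image_coneCo_inter_coneCo_nonempty_iff (G.unfoldedCoxeterSystem hm) hF hrhoF,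
    fun s => setOf_simple_fixed_eq_wallH G.cs hrhoE (ne_of_eq_of_ne (hE.diag s) two_ne_zero),
    fun p => setOf_simple_fixed_eq_wallH (G.unfoldedCoxeterSystem hm) hrhoF
      (ne_of_eq_of_ne (hF.diag p) two_ne_zero)⟩

end
end
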